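/- In the growing-siphon interval c_S𝕀, the point 1 is future critical and the point 0 is past critical: every non-trivial controlled path starting at 1 is critical (not flexible), there exists one, and dually every non-trivial controlled path ending at 0 is critical, and there exists one; moreover no point of c_S𝕀 is (bilaterally) critical. -/

import Mathlib

open unitInterval Set

noncomputable def conc {X : Type*} (a b : I → X) : I → X := fun t =>
  if h : (t : ℝ) ≤ 1 / 2 then
    a ⟨2 * (t : ℝ), by constructor <;> nlinarith [t.2.1, t.2.2]⟩
  else
    b ⟨2 * (t : ℝ) - 1, by have h' := not_le.mp h; constructor <;> nlinarith [t.2.1, t.2.2]⟩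

structure IsCStructure {X : Type*} [TopologicalSpace X] (S : Set (I → X)) : Prop where
  cont : ∀ a ∈ S, Continuous a
  const_src : ∀ a ∈ S, (fun _ : I => a 0) ∈ S
  const_tgt : ∀ a ∈ S, (fun _ : I => a 1) ∈ S
  concat : ∀ a ∈ S, ∀ b ∈ S, a 1 = b 0 → conc a b ∈ S
  reparam : ∀ a ∈ S, ∀ ρ : I → I, Continuous ρ → Monotone ρ → Function.Surjective ρ → a ∘ ρ ∈ S

structure IsDStructure {X : Type*} [TopologicalSpace X] (S : Set (I → X)) : Prop where
  cont : ∀ a ∈ S, Continuous a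
  const : ∀ x : X, (fun _ : I => x) ∈ S
  concat : ∀ a ∈ S, ∀ b ∈ S, a 1 = b 0 → conc a b ∈ S
  reparam : ∀ a ∈ S, ∀ ρ : I → I, Continuous ρ → Monotone ρ → a ∘ ρ ∈ S

def IsFlexible {X : Type*} [TopologicalSpace X] (S : Set (I → X)) (a : I → X) : Prop :=
  a ∈ S ∧ ∀ (t₁ t₂ : ℝ) (h0 : 0 ≤ t₁) (h12 : t₁ < t₂) (h1 : t₂ ≤ 1),
    (fun t : I => a ⟨(t₂ - t₁) * (t : ℝ) + t₁, by
      constructor <;>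
        nlinarith [t.2.1, t.2.2, mul_nonneg (sub_nonneg.mpr h12.le) t.2.1,
          mul_le_of_le_one_right (sub_nonneg.mpr h12.le) t.2.2]⟩) ∈ S

/-- The growing-siphon interval `c_S𝕀`: the c-structure generated by all increasing
continuous maps together with the reversion `r(t) = 1 - t`. -/
def cSgen : Set (I → I) :=
  ⋂₀ {S : Set (I → I) | IsCStructure S ∧
    {a : I → I | Continuous a ∧ Monotone a} ⊆ S ∧ (unitInterval.symm : I → I) ∈ S}

/-!
Every path of `c_S𝕀` is continuous and either increasing or passes through `1`: these paths
form a c-structure containing the generators. A flexible path `a` is therefore increasing: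
if `a t < a s` with `s < t`, let `u` be the last time in `[s, t]` at which `a` equals `1`.
Restrictions of `a` to intervals in `(u, t]` avoid `1`, hence are increasing, so `a ≤ a t`
on `(u, t)` and by continuity `1 = a u ≤ a t < a s`. An increasing path starting at `1` or
ending at `0` is constant, while the reversion is a non-constant path from `1` to `0`, and
the identity is a non-constant flexible path through every point.
-/

theorem conc_eq_trans {X : Type*} [TopologicalSpace X] {a b : I → X} (ha : Continuous a)
    (hb : Continuous b) (hab : a 1 = b 0) :
    conc a b = ⇑(Path.trans (⟨⟨a, ha⟩, rfl, rfl⟩ : Path (a 0) (a 1))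
      ⟨⟨b, hb⟩, hab.symm, rfl⟩) := by
  funext t
  rw [Path.trans_apply]
  rfl

theorem continuous_conc {X : Type*} [TopologicalSpace X] {a b : I → X} (ha : Continuous a)
    (hb : Continuous b) (hab : a 1 = b 0) : Continuous (conc a b) :=
  conc_eq_trans ha hb hab ▸ Path.continuous _

theorem range_conc {X : Type*} [TopologicalSpace X] {a b : I → X} (ha : Continuous a)
    (hb : Continuous b) (hab : a 1 = b 0) : range (conc a b) = range a ∪ range b := by
  rw [conc_eq_trans ha hb hab, Path.trans_range]
  rfl

theorem monotone_conc {X : Type*} [Preorder X] {a b : I → X} (ha : Monotone a)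
    (hb : Monotone b) (hab : a 1 ≤ b 0) : Monotone (conc a b) := by
  intro s t hst
  have hst' : (s : ℝ) ≤ t := hst
  unfold conc
  split_ifs with hs ht ht
  · exact ha (Subtype.mk_le_mk.mpr (by linarith))
  · exact (ha le_one').trans (hab.trans (hb nonneg'))
  · linarith
  · exact hb (Subtype.mk_le_mk.mpr (by linarith))

theorem Monotone.eq_of_map_bot_eq_top {α β : Type*} [Preorder α] [OrderBot α] [PartialOrder β]
    [OrderTop β] {f : α → β} (hf : Monotone f) (h : f ⊥ = ⊤) (s t : α) : f s = f t :=
  (top_unique (h ▸ hf bot_le)).trans (top_unique (h ▸ hf bot_le)).symm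

theorem Monotone.eq_of_map_top_eq_bot {α β : Type*} [Preorder α] [OrderTop α] [PartialOrder β]
    [OrderBot β] {f : α → β} (hf : Monotone f) (h : f ⊤ = ⊥) (s t : α) : f s = f t :=
  hf.dual.eq_of_map_bot_eq_top h s t

theorem isCStructure_monotone_or_one_mem_range :
    IsCStructure {a : I → I | Continuous a ∧ (Monotone a ∨ 1 ∈ range a)} where
  cont _ ha := ha.1
  const_src _ _ := ⟨continuous_const, .inl monotone_const⟩
  const_tgt _ _ := ⟨continuous_const, .inl monotone_const⟩
  concat a ha b hb hab := by
    refine ⟨continuous_conc ha.1 hb.1 hab, ?_⟩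
    rw [range_conc ha.1 hb.1 hab]
    rcases ha.2, hb.2 with ⟨ha_mono | ha_one, hb_mono | hb_one⟩
    · exact .inl (monotone_conc ha_mono hb_mono hab.le)
    · exact .inr (.inr hb_one)
    all_goals exact .inr (.inl ha_one)
  reparam a ha ρ hρc hρm hρs :=
    ⟨ha.1.comp hρc, ha.2.imp (·.comp hρm) fun h => by rwa [hρs.range_comp]⟩

theorem mem_cSgen_of_monotone {a : I → I} (hc : Continuous a) (hm : Monotone a) :
    a ∈ cSgen :=
  fun _ hS => hS.2.1 ⟨hc, hm⟩

theorem symm_mem_cSgen : (σ : I → I) ∈ cSgen := fun _ hS => hS.2.2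

theorem cSgen_subset_monotone_or_one_mem_range :
    cSgen ⊆ {a : I → I | Continuous a ∧ (Monotone a ∨ 1 ∈ range a)} :=
  sInter_subset_of_mem ⟨isCStructure_monotone_or_one_mem_range,
    fun _ ha => ⟨ha.1, .inl ha.2⟩, continuous_symm, .inr ⟨0, symm_zero⟩⟩

theorem isFlexible_of_monotone {a : I → I} (hc : Continuous a) (hm : Monotone a) :
    IsFlexible cSgen a := by
  refine ⟨mem_cSgen_of_monotone hc hm, fun t₁ t₂ _ h12 _ => mem_cSgen_of_monotone ?_ ?_⟩
  · fun_prop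
  · intro x y hxy
    exact hm (Subtype.mk_le_mk.mpr (by nlinarith [show (x : ℝ) ≤ y from hxy]))

theorem IsFlexible.le_or_one_mem_image_Icc {a : I → I} (hf : IsFlexible cSgen a) {s t : I}
    (hst : s < t) : a s ≤ a t ∨ 1 ∈ a '' Icc s t := by
  have hrestr := cSgen_subset_monotone_or_one_mem_range (hf.2 s t s.2.1 hst t.2.2)
  rcases hrestr.2 with hmono | ⟨u, hu⟩
  · left
    simpa using hmono (zero_le_one : (0 : I) ≤ 1)
  · have hst' : (s : ℝ) < t := hst
    refine .inr ⟨⟨(t - s) * u + s, _⟩, ⟨?_, ?_⟩, hu⟩ <;>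
      rw [← Subtype.coe_le_coe] <;> dsimp only <;> nlinarith [u.2.1, u.2.2]

theorem IsFlexible.monotone {a : I → I} (hf : IsFlexible cSgen a) : Monotone a := by
  have hcont := (cSgen_subset_monotone_or_one_mem_range hf.1).1
  intro s t hst
  by_contra! hlt
  have hst' : s < t := lt_of_le_of_ne hst (by rintro rfl; exact lt_irrefl _ hlt)
  obtain ⟨u, ⟨⟨hsu, hut⟩, hu1⟩, hmax⟩ :
      ∃ u, IsGreatest {w | w ∈ Icc s t ∧ a w = 1} u :=
    (isClosed_Icc.inter (isClosed_eq hcont continuous_const)).isCompact.exists_isGreatest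
      ((hf.le_or_one_mem_image_Icc hst').resolve_left hlt.not_ge)
  have hut' : u < t := lt_of_le_of_ne hut (by rintro rfl; exact (hu1 ▸ hlt).not_ge le_one')
  have hbelow : Ioo u t ⊆ {w | a w ≤ a t} := fun w ⟨huw, hwt⟩ =>
    (hf.le_or_one_mem_image_Icc hwt).resolve_right fun ⟨v, ⟨hwv, hvt⟩, hv1⟩ =>
      (hmax ⟨⟨hsu.trans (huw.le.trans hwv), hvt⟩, hv1⟩).not_gt (huw.trans_le hwv)
  have hu_le : a u ≤ a t := closure_minimal hbelow (isClosed_le hcont continuous_const)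
    (by rw [closure_Ioo hut'.ne]; exact ⟨le_rfl, hut⟩)
  exact ((hu1 ▸ hu_le).trans_lt hlt).not_ge le_one'

/-- In the growing-siphon interval, `1` is future critical, `0` is past critical, and no point
is (bilaterally) critical. -/
theorem cSgen_critical_points :
    ((∀ a ∈ cSgen, a 0 = 1 → (∃ s t : I, a s ≠ a t) → ¬ IsFlexible cSgen a) ∧
      ∃ a ∈ cSgen, a 0 = 1 ∧ ∃ s t : I, a s ≠ a t) ∧
    ((∀ a ∈ cSgen, a 1 = 0 → (∃ s t : I, a s ≠ a t) → ¬ IsFlexible cSgen a) ∧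
      ∃ a ∈ cSgen, a 1 = 0 ∧ ∃ s t : I, a s ≠ a t) ∧
    ∀ x : I, ¬ ((∀ a ∈ cSgen, (∃ t : I, a t = x) → (∃ s t : I, a s ≠ a t) →
        ¬ IsFlexible cSgen a) ∧
      ∃ a ∈ cSgen, (∃ t : I, a t = x) ∧ ∃ s t : I, a s ≠ a t) := by
  have hσ : σ 0 ≠ σ 1 := by simp
  refine ⟨⟨fun a _ h0 ⟨s, t, hne⟩ hf => hne (hf.monotone.eq_of_map_bot_eq_top h0 s t),
      σ, symm_mem_cSgen, symm_zero, 0, 1, hσ⟩,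
    ⟨fun a _ h1 ⟨s, t, hne⟩ hf => hne (hf.monotone.eq_of_map_top_eq_bot h1 s t),
      σ, symm_mem_cSgen, symm_one, 0, 1, hσ⟩,
    fun x ⟨hcrit, _⟩ => hcrit id (mem_cSgen_of_monotone continuous_id monotone_id) ⟨x, rfl⟩
      ⟨0, 1, zero_ne_one⟩ (isFlexible_of_monotone continuous_id monotone_id)⟩
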